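/- Let q > 2, s > 2, max{1,q−s+2} ≤ k ≤ q, and write s = 2mq+p with 0 ≤ p < 2q. If k = q and 3 ≤ p ≤ q+1, then Γ_{q,s,k} is not weakly distance-regular: with e = (0,0), z = (0,1), x = (q−2, mq+2), y = (q−2, mq+1), one has ∂̃(e,x) = ∂̃(e,y), but z lies in P_{(1,q),∂̃(z,x)}(e,x) while P_{(1,q),∂̃(z,x)}(e,y) = ∅. -/
import Mathlib


section Defs
variable {V : Type*}

/-- There is a directed walk of length `n` from `x` to `y` in the digraph with arc relation `A`. -/
def hasPath (A : V → V → Prop) (x y : V) (n : ℕ) : Prop :=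
  ∃ f : ℕ → V, f 0 = x ∧ f n = y ∧ ∀ i < n, A (f i) (f (i+1))

/-- The distance from `x` to `y`: the length of a shortest directed path. -/
noncomputable def ddist (A : V → V → Prop) (x y : V) : ℕ :=
  sInf {n | hasPath A x y n}

/-- The two-way distance `∂̃(x,y) = (∂(x,y), ∂(y,x))`. -/
noncomputable def dtilde (A : V → V → Prop) (x y : V) : ℕ × ℕ :=
  (ddist A x y, ddist A y x)

/-- `σ` is an automorphism of the digraph with arc relation `A`. -/
def IsAuto (A : V → V → Prop) (σ : V ≃ V) : Prop :=
  ∀ u v, A u v ↔ A (σ u) (σ v)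

/-- Weakly distance-transitive digraph. -/
def WDT (A : V → V → Prop) : Prop :=
  ∀ x y x' y' : V, dtilde A x y = dtilde A x' y' →
    ∃ σ : V ≃ V, IsAuto A σ ∧ σ x = x' ∧ σ y = y'

/-- Weakly distance-regular digraph: `|P_{ĩ,j̃}(x,y)|` depends only on `∂̃(x,y)`. -/
def WDR (A : V → V → Prop) : Prop :=
  ∀ x y x' y' : V, dtilde A x y = dtilde A x' y' →
    ∀ i j : ℕ × ℕ,
      Nat.card {z : V | dtilde A x z = i ∧ dtilde A z y = j} =
      Nat.card {z : V | dtilde A x' z = i ∧ dtilde A z y' = j}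

open Classical in
/-- The binary matrix `A_{i,j}` with `(A_{i,j})_{x,y} = 1` iff `∂̃(x,y) = (i,j)`. -/
noncomputable def Amat (V : Type*) [Fintype V] (A : V → V → Prop) (i j : ℕ) : Matrix V V ℕ :=
  fun x y => if dtilde A x y = (i, j) then 1 else 0

/-- The arc relation of the Cayley digraph `Cay(Z_4 × Z_g, {(1,0),(0,1),(2,1)})`. -/
def cayA (g : ℕ) : (ZMod 4 × ZMod g) → (ZMod 4 × ZMod g) → Prop :=
  fun x y => y = x + (1,0) ∨ y = x + (0,1) ∨ y = x + (2,1)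

/-- The arc relation of the digraph `Γ_{q,s,k}` of Construction 2.2. -/
def qskA (q s k : ℕ) : (ZMod q × ZMod s) → (ZMod q × ZMod s) → Prop :=
  fun x y =>
    (y = (x.1 + 1, x.2)) ∨
    (x.2 ≠ -1 ∧ y = (x.1, x.2 + 1)) ∨
    (x.2 ≠ 0 ∧ y = (x.1 + 1, x.2 - 1)) ∨
    (x.2 = -1 ∧ y = (x.1 - (k : ZMod q) + 1, 0)) ∨
    (x.2 = 0 ∧ y = (x.1 + (k : ZMod q), -1))

end Defs

section Aux
variable {q s : ℕ}

lemma zmod_cast_inj (hs : 0 < s) {a b : ℕ} (ha : a < s) (hb : b < s)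
    (h : (a : ZMod s) = b) : a = b := by
  haveI : NeZero s := ⟨hs.ne'⟩
  have := congrArg ZMod.val h
  rwa [ZMod.val_cast_of_lt ha, ZMod.val_cast_of_lt hb] at this

lemma zmod_neg_one (hs : 0 < s) : ((s - 1 : ℕ) : ZMod s) = -1 := by
  have h1 : (1:ℕ) ≤ s := hs
  push_cast [Nat.cast_sub h1]
  simp [ZMod.natCast_self]

lemma cast_pred {ρ : ℕ} (hρ : ρ ≠ 0) : ((ρ - 1 : ℕ) : ZMod s) = (ρ : ZMod s) - 1 := by
  obtain ⟨ρ', rfl⟩ := Nat.exists_eq_succ_of_ne_zero hρ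
  simp only [Nat.succ_sub_one]
  push_cast
  ring

lemma walk_inv (hq : 2 < q) (hs : 2 < s)
    (f : ℕ → ZMod q × ZMod s) (n : ℕ)
    (hf : ∀ i < n, qskA q s q (f i) (f (i+1)))
    (β : ℕ) (hβ : β < s) (hfb : (f 0).2 = (β : ZMod s)) :
    ∃ n1 n2 n3 n4 n5 ρ : ℕ, ρ < s ∧
      n1+n2+n3+n4+n5 = n ∧
      (f n).1 = (f 0).1 + ((n1+n3+n4 : ℕ) : ZMod q) ∧
      (f n).2 = (ρ : ZMod s) ∧
      (ρ : ℤ) = (β : ℤ) + ((n2:ℤ) + n4 - n3 - n5) - (s : ℤ) * ((n4:ℤ) - n5) := by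
  induction n with
  | zero => exact ⟨0,0,0,0,0,β, hβ, by simp, by simp, hfb, by push_cast; ring⟩
  | succ n ih =>
    obtain ⟨n1,n2,n3,n4,n5,ρ,hρ,hsum,ha,hb,heq⟩ := ih (fun i hi => hf i (by omega))
    have harc := hf n (by omega)
    rcases harc with h1 | ⟨hc, h2⟩ | ⟨hc, h3⟩ | ⟨hc, h4⟩ | ⟨hc, h5⟩
    · refine ⟨n1+1,n2,n3,n4,n5,ρ,hρ, by omega, ?_, ?_, ?_⟩
      · rw [h1]; simp only [ha]; push_cast; ring
      · rw [h1]; exact hb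
      · push_cast at heq ⊢; linarith
    · have hρne : ρ ≠ s - 1 := by
        intro hcon
        exact hc (by rw [hb, hcon, zmod_neg_one (by omega)])
      refine ⟨n1,n2+1,n3,n4,n5,ρ+1, by omega, by omega, ?_, ?_, ?_⟩
      · rw [h2]; exact ha
      · rw [h2]; simp only [hb]; push_cast; ring
      · push_cast at heq ⊢; linarith
    · have hρne : ρ ≠ 0 := by
        intro hcon; exact hc (by rw [hb, hcon]; simp)
      refine ⟨n1,n2,n3+1,n4,n5,ρ-1, by omega, by omega, ?_, ?_, ?_⟩
      · rw [h3]; simp only [ha]; push_cast; ring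
      · rw [h3]; simp only [hb, cast_pred hρne]
      · have hρ1 : ((ρ - 1 : ℕ) : ℤ) = (ρ : ℤ) - 1 := by omega
        rw [hρ1]; push_cast at heq ⊢; linarith
    · have hρs : ρ = s - 1 := by
        apply zmod_cast_inj (by omega : 0 < s) hρ (by omega)
        rw [← hb, hc, zmod_neg_one (by omega : 0 < s)]
      refine ⟨n1,n2,n3,n4+1,n5,0, by omega, by omega, ?_, ?_, ?_⟩
      · rw [h4]; simp only [ha, ZMod.natCast_self]; push_cast; ring
      · rw [h4]; simp
      · have hρ1 : (ρ : ℤ) = (s : ℤ) - 1 := by omega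
        push_cast at heq ⊢; rw [hρ1] at heq; linarith
    · have hρ0 : ρ = 0 := by
        apply zmod_cast_inj (by omega : 0 < s) hρ (by omega)
        rw [← hb, hc]; simp
      refine ⟨n1,n2,n3,n4,n5+1,s-1, by omega, by omega, ?_, ?_, ?_⟩
      · rw [h5]; simp only [ha, ZMod.natCast_self]; push_cast; ring
      · rw [h5]; exact (zmod_neg_one (by omega : 0 < s)).symm
      · have hρ1 : ((s - 1 : ℕ) : ℤ) = (s : ℤ) - 1 := by omega
        rw [hρ1]; push_cast at heq ⊢; rw [hρ0] at heq; push_cast at heq; linarith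
end Aux

section Paths
variable {V : Type*} {A : V → V → Prop}

lemma hasPath_trans {u v w : V} {a b : ℕ}
    (h1 : hasPath A u v a) (h2 : hasPath A v w b) : hasPath A u w (a+b) := by
  obtain ⟨f, hf0, hfa, hf⟩ := h1
  obtain ⟨g, hg0, hgb, hg⟩ := h2
  refine ⟨fun i => if i ≤ a then f i else g (i - a), by simp [hf0], ?_, ?_⟩
  · by_cases hb : b = 0
    · subst hb; simp only [Nat.add_zero, le_refl, if_pos]
      rw [hfa, ← hg0, hgb]
    · have hle : ¬ (a + b ≤ a) := by omega
      simp only [hle, if_neg, Nat.add_sub_cancel_left]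
      rw [hgb]; simp
  · intro i hi
    by_cases h1' : i + 1 ≤ a
    · have h2' : i ≤ a := by omega
      simp only [h1', h2', if_pos]
      exact hf i (by omega)
    · by_cases h2' : i ≤ a
      · have hia : i = a := by omega
        subst hia
        simp only [h2', if_pos, h1', if_neg, Nat.add_sub_cancel_left]
        rw [hfa, ← hg0]
        exact hg 0 (by omega)
      · have h3' : i - a + 1 = i + 1 - a := by omega
        simp only [h1', h2', if_neg]
        rw [← h3']
        exact hg (i - a) (by omega)

lemma hasPath_single {u v : V} (h : A u v) : hasPath A u v 1 :=
  ⟨fun i => if i = 0 then u else v, by simp, by simp, by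
    intro i hi
    have : i = 0 := by omega
    subst this; simpa using h⟩

lemma hasPath_refl (u : V) : hasPath A u u 0 := ⟨fun _ => u, rfl, rfl, by omega⟩

end Paths

section Segs
variable {q s : ℕ}

lemma seg1 (hq : 2 < q) (hs : 2 < s) (l : ℕ) (a : ZMod q) (b : ZMod s) :
    hasPath (qskA q s q) (a, b) (a + (l : ZMod q), b) l := by
  refine ⟨fun i => (a + (i : ZMod q), b), by simp, rfl, ?_⟩
  intro i hi
  left
  exact Prod.ext (by push_cast; ring) rfl

lemma seg2 (hq : 2 < q) (hs : 2 < s) (l β : ℕ) (a : ZMod q) (hβl : β + l ≤ s - 1) :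
    hasPath (qskA q s q) (a, (β : ZMod s)) (a, ((β + l : ℕ) : ZMod s)) l := by
  refine ⟨fun i => (a, ((β + i : ℕ) : ZMod s)), by simp, rfl, ?_⟩
  intro i hi
  right; left
  constructor
  · intro hcon
    rw [show (-1 : ZMod s) = ((s-1:ℕ) : ZMod s) from (zmod_neg_one (by omega)).symm] at hcon
    have := zmod_cast_inj (show 0 < s by omega) (show β + i < s by omega) (by omega) hcon
    omega
  · simp only [Prod.mk.injEq, true_and]
    push_cast; ring

lemma seg3 (hq : 2 < q) (hs : 2 < s) (l β : ℕ) (a : ZMod q) (hβ : β < s) (hl : l ≤ β) :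
    hasPath (qskA q s q) (a, (β : ZMod s)) (a + (l : ZMod q), ((β - l : ℕ) : ZMod s)) l := by
  refine ⟨fun i => (a + (i : ZMod q), ((β - i : ℕ) : ZMod s)), by simp, rfl, ?_⟩
  intro i hi
  right; right; left
  constructor
  · intro hcon
    rw [show (0 : ZMod s) = ((0:ℕ) : ZMod s) by simp] at hcon
    have := zmod_cast_inj (show 0 < s by omega) (show β - i < s by omega) (by omega) hcon
    omega
  · simp only [Prod.mk.injEq]
    constructor
    · push_cast; ring
    · rw [show β - (i+1) = β - i - 1 from by omega, cast_pred (show β - i ≠ 0 by omega)]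

lemma step5 (hq : 2 < q) (hs : 2 < s) (a : ZMod q) :
    qskA q s q (a, (0 : ZMod s)) (a, ((s - 1 : ℕ) : ZMod s)) := by
  right; right; right; right
  refine ⟨rfl, ?_⟩
  rw [zmod_neg_one (show 0 < s by omega), ZMod.natCast_self]
  simp

end Segs

section Extract
variable {q s : ℕ}

lemma extract (hq : 2 < q) (hs : 2 < s) {u v : ZMod q × ZMod s} {n : ℕ}
    (h : hasPath (qskA q s q) u v n)
    (α β : ℕ) (hα : α < s) (hβ : β < s)
    (hu : u.2 = (α : ZMod s)) (hv : v.2 = (β : ZMod s)) :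
    ∃ n1 n2 n3 n4 n5 : ℕ,
      n1+n2+n3+n4+n5 = n ∧
      v.1 = u.1 + ((n1+n3+n4 : ℕ) : ZMod q) ∧
      (β : ℤ) = (α : ℤ) + ((n2:ℤ)+n4-n3-n5) - (s:ℤ)*((n4:ℤ)-n5) := by
  obtain ⟨f, hf0, hfn, hf⟩ := h
  obtain ⟨n1,n2,n3,n4,n5,ρ,hρ,hsum,ha,hb,heq⟩ :=
    walk_inv hq hs f n hf α hα (by rw [hf0]; exact hu)
  have hρβ : ρ = β := zmod_cast_inj (by omega) hρ hβ (by rw [← hb, hfn]; exact hv)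
  subst hρβ
  rw [hfn, hf0] at ha
  exact ⟨n1,n2,n3,n4,n5, hsum, ha, heq⟩

lemma dvd_of_cast_zero (hq : 0 < q) {t : ℕ} (h : ((t:ℕ) : ZMod q) = 0) : q ∣ t := by
  haveI : NeZero q := ⟨hq.ne'⟩
  exact (ZMod.natCast_eq_zero_iff t q).mp h

lemma dvd_helper_c (hq : 2 < q) {c M m' : ℕ} (hMq : M = m' * q) (hdvd : q ∣ c + 2)
    (hge : M ≤ c) : M + q ≤ c + 2 := by
  obtain ⟨l, hl⟩ := hdvd
  have h1 : m' * q = q * m' := by ring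
  have hml : m' + 1 ≤ l := by
    by_contra hcon
    push_neg at hcon
    have h2 : q * l ≤ q * m' := Nat.mul_le_mul_left q (by omega)
    omega
  have h3 : q * (m' + 1) ≤ q * l := Nat.mul_le_mul_left q hml
  have h4 : q * (m' + 1) = m' * q + q := by ring
  omega

lemma dvd_mq (hq : 2 < q) {M m' : ℕ} (hMq : M = m' * q) (h : q ∣ M + q - 1) : False := by
  have h2 : q ∣ M + q := ⟨m' + 1, by rw [hMq]; ring⟩
  have h3 : q ∣ (M + q) - (M + q - 1) := Nat.dvd_sub h2 h
  have h4 : (M + q) - (M + q - 1) = 1 := by omega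
  rw [h4] at h3
  have := Nat.le_of_dvd (by omega) h3
  omega

end Extract

section Arith
variable {q s p M m : ℕ}

lemma arith1 (hq : 2 < q) (hs : 2 < s) (hs2 : s = 2*M+p) (hp3 : 3 ≤ p) (hMq : M = m*q)
    {n1 n2 n3 n4 n5 n δ : ℕ} (hδ1 : 1 ≤ δ) (hδ2 : δ ≤ 2)
    (hsum : n1+n2+n3+n4+n5 = n)
    (hdvd : q ∣ (n1+n3+n4) + 2)
    (heq : ((M:ℤ) + δ) = ((n2:ℤ)+n4-n3-n5) - (s:ℤ)*((n4:ℤ)-n5)) :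
    M + q - 1 ≤ n := by
  obtain ⟨P, hP⟩ : ∃ P:ℤ, P = (s:ℤ)*((n4:ℤ)-n5) := ⟨_, rfl⟩
  rw [← hP] at heq
  have hsz : (3:ℤ) ≤ (s:ℤ) := by exact_mod_cast hs
  have hc1 : q ≤ (n1+n3+n4) + 2 := Nat.le_of_dvd (by omega) hdvd
  rcases le_or_gt 0 ((n4:ℤ)-(n5:ℤ)) with hJ | hJ
  · have h1 : (n4:ℤ) - n5 ≤ P := by
      rw [hP]; nlinarith [mul_nonneg (show (0:ℤ) ≤ (s:ℤ)-1 by linarith) hJ]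
    omega
  · have hJ1 : (n4:ℤ) - n5 ≤ -1 := by omega
    have h1 : P ≤ ((n4:ℤ) - n5) - ((s:ℤ) - 1) := by
      rw [hP]
      nlinarith [mul_nonneg (show (0:ℤ) ≤ (s:ℤ)-1 by linarith)
        (show (0:ℤ) ≤ -((n4:ℤ)-n5)-1 by linarith)]
    have hc2 : M ≤ n1+n3+n4 := by omega
    have hc3 : M + q ≤ (n1+n3+n4) + 2 := dvd_helper_c hq hMq hdvd hc2
    omega

lemma arith2a (hq : 2 < q) (hs : 2 < s) (hs2 : s = 2*M+p) (hp3 : 3 ≤ p) (hMq : M = m*q)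
    {n1 n2 n3 n4 n5 n : ℕ}
    (hsum : n1+n2+n3+n4+n5 = n)
    (hdvd : q ∣ (n1+n3+n4) + q - 2)
    (heq : (0:ℤ) = ((M:ℤ) + 2) + (((n2:ℤ)+n4-n3-n5) - (s:ℤ)*((n4:ℤ)-n5))) :
    M + 2 ≤ n := by
  obtain ⟨P, hP⟩ : ∃ P:ℤ, P = (s:ℤ)*((n4:ℤ)-n5) := ⟨_, rfl⟩
  rw [← hP] at heq
  have hsz : (3:ℤ) ≤ (s:ℤ) := by exact_mod_cast hs
  by_contra hn
  push_neg at hn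
  rcases lt_trichotomy ((n4:ℤ)-(n5:ℤ)) 1 with hJ | hJ | hJ
  · have hJ0 : (n4:ℤ) - n5 ≤ 0 := by omega
    have h1 : P ≤ 0 := by
      rw [hP]; nlinarith [mul_nonneg (show (0:ℤ) ≤ (s:ℤ) from by positivity) (show (0:ℤ) ≤ -((n4:ℤ)-n5) by linarith)]
    omega
  · have h1 : P = s := by rw [hP, hJ, mul_one]
    have hc : n1+n3+n4 = 1 := by omega
    have := Nat.le_of_dvd (show 0 < n1+n3+n4 + q - 2 by omega) hdvd
    omega
  · have h1 : 2*(s:ℤ) ≤ P := by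
      rw [hP]; nlinarith [mul_nonneg (show (0:ℤ) ≤ (s:ℤ) from by positivity) (show (0:ℤ) ≤ ((n4:ℤ)-n5) - 2 by omega)]
    omega

lemma arith2b (hq : 2 < q) (hs : 2 < s) (hs2 : s = 2*M+p) (hp3 : 3 ≤ p) (hMq : M = m*q)
    {n1 n2 n3 n4 n5 n : ℕ}
    (hsum : n1+n2+n3+n4+n5 = n)
    (hdvd : q ∣ (n1+n3+n4) + q - 2)
    (heq : (0:ℤ) = ((M:ℤ) + 1) + (((n2:ℤ)+n4-n3-n5) - (s:ℤ)*((n4:ℤ)-n5))) :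
    M + 2 ≤ n := by
  obtain ⟨P, hP⟩ : ∃ P:ℤ, P = (s:ℤ)*((n4:ℤ)-n5) := ⟨_, rfl⟩
  rw [← hP] at heq
  have hsz : (3:ℤ) ≤ (s:ℤ) := by exact_mod_cast hs
  by_contra hn
  push_neg at hn
  rcases lt_trichotomy ((n4:ℤ)-(n5:ℤ)) 0 with hJ | hJ | hJ
  · have h1 : P ≤ -(s:ℤ) := by
      rw [hP]; nlinarith [mul_nonneg (show (0:ℤ) ≤ (s:ℤ) from by positivity) (show (0:ℤ) ≤ -((n4:ℤ)-n5) - 1 by omega)]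
    omega
  · have h1 : P = 0 := by rw [hP, hJ, mul_zero]
    have hc : n1+n3+n4 = M+1 := by omega
    have hdvd' : q ∣ M + q - 1 := by
      have : (n1+n3+n4) + q - 2 = M + q - 1 := by omega
      rwa [this] at hdvd
    exact absurd (dvd_mq hq hMq hdvd') (fun h => h)
  · have h1 : (s:ℤ) ≤ P := by
      rw [hP]; nlinarith [mul_nonneg (show (0:ℤ) ≤ (s:ℤ) from by positivity) (show (0:ℤ) ≤ ((n4:ℤ)-n5) - 1 by omega)]
    omega

lemma arith3 (hq : 2 < q) (hs : 2 < s)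
    {n1 n2 n3 n4 n5 n α : ℕ} (hα1 : 1 ≤ α)
    (hsum : n1+n2+n3+n4+n5 = n)
    (hdvd : q ∣ (n1+n3+n4))
    (heq : (0:ℤ) = (α:ℤ) + (((n2:ℤ)+n4-n3-n5) - (s:ℤ)*((n4:ℤ)-n5))) :
    q ≤ n := by
  obtain ⟨P, hP⟩ : ∃ P:ℤ, P = (s:ℤ)*((n4:ℤ)-n5) := ⟨_, rfl⟩
  rw [← hP] at heq
  have hsz : (3:ℤ) ≤ (s:ℤ) := by exact_mod_cast hs
  by_contra hn
  push_neg at hn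
  have hc0 : n1+n3+n4 = 0 := by
    rcases Nat.eq_zero_or_pos (n1+n3+n4) with h | h
    · exact h
    · have := Nat.le_of_dvd h hdvd; omega
  have hn40 : n4 = 0 := by omega
  have h1 : P ≤ -(n5:ℤ) := by
    rw [hP, hn40]
    push_cast
    nlinarith [mul_nonneg (show (0:ℤ) ≤ (s:ℤ)-1 by linarith) (show (0:ℤ) ≤ (n5:ℤ) by positivity)]
  omega

lemma arith4 (hq : 2 < q) (hs : 2 < s) (hs2 : s = 2*M+p) (hp3 : 3 ≤ p) (hpq1 : p ≤ q+1)
    (hMq : M = m*q)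
    {n1 n2 n3 n4 n5 n : ℕ}
    (hsum : n1+n2+n3+n4+n5 = n)
    (hdvd : q ∣ (n1+n3+n4) + q - 2)
    (heq : ((s:ℤ) - 1) = ((M:ℤ) + 1) + (((n2:ℤ)+n4-n3-n5) - (s:ℤ)*((n4:ℤ)-n5))) :
    M + 3 ≤ n := by
  obtain ⟨P, hP⟩ : ∃ P:ℤ, P = (s:ℤ)*((n4:ℤ)-n5) := ⟨_, rfl⟩
  rw [← hP] at heq
  have hsz : (3:ℤ) ≤ (s:ℤ) := by exact_mod_cast hs
  by_contra hn
  push_neg at hn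
  rcases lt_trichotomy ((n4:ℤ)-(n5:ℤ)) 0 with hJ | hJ | hJ
  · have hJ1 : (n4:ℤ) - n5 ≤ -1 := by omega
    have h1 : P ≤ ((n4:ℤ) - n5) - ((s:ℤ) - 1) := by
      rw [hP]
      nlinarith [mul_nonneg (show (0:ℤ) ≤ (s:ℤ)-1 by linarith)
        (show (0:ℤ) ≤ -((n4:ℤ)-n5)-1 by linarith)]
    have hT : n1 = 0 ∧ n2 = 0 ∧ n4 = 0 ∧ n5 = 1 ∧ n3 = M+1 := by omega
    have hc : n1+n3+n4 = M+1 := by omega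
    have hdvd' : q ∣ M + q - 1 := by
      have : (n1+n3+n4) + q - 2 = M + q - 1 := by omega
      rwa [this] at hdvd
    exact dvd_mq hq hMq hdvd'
  · have h1 : P = 0 := by rw [hP, hJ, mul_zero]
    have hc : n1+n3+n4 ≤ 1 := by omega
    have := Nat.le_of_dvd (show 0 < n1+n3+n4 + q - 2 by omega) hdvd
    omega
  · have h1 : (s:ℤ) ≤ P := by
      rw [hP]; nlinarith [mul_nonneg (show (0:ℤ) ≤ (s:ℤ) from by positivity) (show (0:ℤ) ≤ ((n4:ℤ)-n5) - 1 by omega)]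
    omega

end Arith

section DD
variable {V : Type*} {A : V → V → Prop}

lemma ddist_le {u v : V} {n : ℕ} (h : hasPath A u v n) : ddist A u v ≤ n :=
  Nat.sInf_le h

lemma ddist_eq {u v : V} {n : ℕ} (h : hasPath A u v n)
    (hlb : ∀ m', hasPath A u v m' → n ≤ m') : ddist A u v = n :=
  le_antisymm (Nat.sInf_le h)
    (hlb _ (Nat.sInf_mem (Set.nonempty_of_mem (show n ∈ {k | hasPath A u v k} from h))))

lemma hasPath_of_ddist_eq {u v : V} {n : ℕ} (h : ddist A u v = n) (hn : n ≠ 0) :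
    hasPath A u v n := by
  have hne : {k | hasPath A u v k}.Nonempty := by
    by_contra hcon
    rw [Set.not_nonempty_iff_eq_empty] at hcon
    rw [ddist, hcon, Nat.sInf_empty] at h
    exact hn h.symm
  have hm := Nat.sInf_mem hne
  rwa [show sInf {k | hasPath A u v k} = n from h] at hm

end DD

section Casts
variable {q : ℕ}

lemma hq2cast (hq : 2 < q) : ((q-2:ℕ) : ZMod q) = -2 := by
  rw [Nat.cast_sub (by omega : 2 ≤ q), ZMod.natCast_self]
  ring

lemma dvd_from_fst_ex (hq : 2 < q) {c : ℕ}
    (ha : ((q-2:ℕ):ZMod q) = (0:ZMod q) + (c:ZMod q)) : q ∣ c + 2 := by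
  apply dvd_of_cast_zero (by omega : 0 < q)
  rw [zero_add] at ha
  push_cast
  rw [← ha, hq2cast hq]
  ring

lemma dvd_from_fst_xe (hq : 2 < q) {c : ℕ}
    (ha : (0:ZMod q) = ((q-2:ℕ):ZMod q) + (c:ZMod q)) : q ∣ c + q - 2 := by
  have he : c + q - 2 = c + (q-2) := by omega
  rw [he]
  apply dvd_of_cast_zero (by omega : 0 < q)
  rw [hq2cast hq] at ha
  push_cast
  rw [hq2cast hq]
  linear_combination -ha

lemma dvd_from_fst_ze (hq : 2 < q) {c : ℕ}
    (ha : (0:ZMod q) = (0:ZMod q) + (c:ZMod q)) : q ∣ c := by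
  apply dvd_of_cast_zero (by omega : 0 < q)
  rw [zero_add] at ha
  exact ha.symm

end Casts

section LB
variable {q s p M m : ℕ}

lemma lb_EX (hq : 2 < q) (hs : 2 < s) (hs2 : s = 2*M+p) (hp3 : 3 ≤ p) (hMq : M = m*q)
    {n : ℕ}
    (h : hasPath (qskA q s q) ((0:ZMod q),(0:ZMod s)) (((q-2:ℕ):ZMod q), ((M+2:ℕ):ZMod s)) n) :
    M + q - 1 ≤ n := by
  obtain ⟨n1,n2,n3,n4,n5,hsum,ha,heq⟩ :=
    extract hq hs h 0 (M+2) (by omega) (by omega) (by simp) rfl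
  refine arith1 hq hs hs2 hp3 hMq (show 1 ≤ 2 by omega) (le_refl 2) hsum
    (dvd_from_fst_ex hq (by simpa using ha)) ?_
  push_cast at heq ⊢
  linarith

lemma lb_EY (hq : 2 < q) (hs : 2 < s) (hs2 : s = 2*M+p) (hp3 : 3 ≤ p) (hMq : M = m*q)
    {n : ℕ}
    (h : hasPath (qskA q s q) ((0:ZMod q),(0:ZMod s)) (((q-2:ℕ):ZMod q), ((M+1:ℕ):ZMod s)) n) :
    M + q - 1 ≤ n := by
  obtain ⟨n1,n2,n3,n4,n5,hsum,ha,heq⟩ :=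
    extract hq hs h 0 (M+1) (by omega) (by omega) (by simp) rfl
  refine arith1 hq hs hs2 hp3 hMq (le_refl 1) (by omega) hsum
    (dvd_from_fst_ex hq (by simpa using ha)) ?_
  push_cast at heq ⊢
  linarith

lemma lb_ZX (hq : 2 < q) (hs : 2 < s) (hs2 : s = 2*M+p) (hp3 : 3 ≤ p) (hMq : M = m*q)
    {n : ℕ}
    (h : hasPath (qskA q s q) ((0:ZMod q),(1:ZMod s)) (((q-2:ℕ):ZMod q), ((M+2:ℕ):ZMod s)) n) :
    M + q - 1 ≤ n := by
  obtain ⟨n1,n2,n3,n4,n5,hsum,ha,heq⟩ :=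
    extract hq hs h 1 (M+2) (by omega) (by omega) (by simp) rfl
  refine arith1 hq hs hs2 hp3 hMq (le_refl 1) (by omega) hsum
    (dvd_from_fst_ex hq (by simpa using ha)) ?_
  push_cast at heq ⊢
  linarith

lemma lb_XE (hq : 2 < q) (hs : 2 < s) (hs2 : s = 2*M+p) (hp3 : 3 ≤ p) (hMq : M = m*q)
    {n : ℕ}
    (h : hasPath (qskA q s q) (((q-2:ℕ):ZMod q), ((M+2:ℕ):ZMod s)) ((0:ZMod q),(0:ZMod s)) n) :
    M + 2 ≤ n := by
  obtain ⟨n1,n2,n3,n4,n5,hsum,ha,heq⟩ :=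
    extract hq hs h (M+2) 0 (by omega) (by omega) rfl (by simp)
  refine arith2a hq hs hs2 hp3 hMq hsum (dvd_from_fst_xe hq (by simpa using ha)) ?_
  push_cast at heq ⊢
  linarith

lemma lb_YE (hq : 2 < q) (hs : 2 < s) (hs2 : s = 2*M+p) (hp3 : 3 ≤ p) (hMq : M = m*q)
    {n : ℕ}
    (h : hasPath (qskA q s q) (((q-2:ℕ):ZMod q), ((M+1:ℕ):ZMod s)) ((0:ZMod q),(0:ZMod s)) n) :
    M + 2 ≤ n := by
  obtain ⟨n1,n2,n3,n4,n5,hsum,ha,heq⟩ :=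
    extract hq hs h (M+1) 0 (by omega) (by omega) rfl (by simp)
  refine arith2b hq hs hs2 hp3 hMq hsum (dvd_from_fst_xe hq (by simpa using ha)) ?_
  push_cast at heq ⊢
  linarith

lemma lb_XZ (hq : 2 < q) (hs : 2 < s) (hs2 : s = 2*M+p) (hp3 : 3 ≤ p) (hMq : M = m*q)
    {n : ℕ}
    (h : hasPath (qskA q s q) (((q-2:ℕ):ZMod q), ((M+2:ℕ):ZMod s)) ((0:ZMod q),(1:ZMod s)) n) :
    M + 2 ≤ n := by
  obtain ⟨n1,n2,n3,n4,n5,hsum,ha,heq⟩ :=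
    extract hq hs h (M+2) 1 (by omega) (by omega) rfl (by simp)
  refine arith2b hq hs hs2 hp3 hMq hsum (dvd_from_fst_xe hq (by simpa using ha)) ?_
  push_cast at heq ⊢
  linarith

lemma lb_ZE (hq : 2 < q) (hs : 2 < s)
    {n : ℕ}
    (h : hasPath (qskA q s q) ((0:ZMod q),(1:ZMod s)) ((0:ZMod q),(0:ZMod s)) n) :
    q ≤ n := by
  obtain ⟨n1,n2,n3,n4,n5,hsum,ha,heq⟩ :=
    extract hq hs h 1 0 (by omega) (by omega) (by simp) (by simp)
  refine arith3 hq hs (le_refl 1) hsum (dvd_from_fst_ze hq (by simpa using ha)) ?_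
  push_cast at heq ⊢
  linarith

lemma lb_WE (hq : 2 < q) (hs : 2 < s)
    {n : ℕ}
    (h : hasPath (qskA q s q) ((0:ZMod q),((s-1:ℕ):ZMod s)) ((0:ZMod q),(0:ZMod s)) n) :
    q ≤ n := by
  obtain ⟨n1,n2,n3,n4,n5,hsum,ha,heq⟩ :=
    extract hq hs h (s-1) 0 (by omega) (by omega) rfl (by simp)
  refine arith3 hq hs (show 1 ≤ s-1 by omega) hsum (dvd_from_fst_ze hq (by simpa using ha)) ?_
  push_cast at heq ⊢
  linarith

lemma lb_YW (hq : 2 < q) (hs : 2 < s) (hs2 : s = 2*M+p) (hp3 : 3 ≤ p) (hpq1 : p ≤ q+1)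
    (hMq : M = m*q) {n : ℕ}
    (h : hasPath (qskA q s q) (((q-2:ℕ):ZMod q), ((M+1:ℕ):ZMod s))
        ((0:ZMod q),((s-1:ℕ):ZMod s)) n) :
    M + 3 ≤ n := by
  obtain ⟨n1,n2,n3,n4,n5,hsum,ha,heq⟩ :=
    extract hq hs h (M+1) (s-1) (by omega) (by omega) rfl rfl
  refine arith4 hq hs hs2 hp3 hpq1 hMq hsum (dvd_from_fst_xe hq (by simpa using ha)) ?_
  have h1 : ((s-1:ℕ):ℤ) = (s:ℤ) - 1 := by omega
  rw [h1] at heq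
  push_cast at heq ⊢
  linarith

end LB

section UB
variable {q s p M m : ℕ}

lemma cast_Mq (hq : 2 < q) (hMq : M = m*q) : ((M + (q - 2):ℕ) : ZMod q) = ((q-2:ℕ) : ZMod q) := by
  rw [hMq, Nat.cast_add, Nat.cast_mul, ZMod.natCast_self, mul_zero, zero_add]

lemma cast_Mq0 (hq : 2 < q) (hMq : M = m*q) : ((M + q:ℕ) : ZMod q) = 0 := by
  have h1 : M + q = (m+1)*q := by rw [hMq]; ring
  rw [h1, Nat.cast_mul, ZMod.natCast_self, mul_zero]

lemma cast_add_nat (a b : ℕ) : ((a:ℕ) : ZMod q) + ((b:ℕ) : ZMod q) = ((a+b : ℕ) : ZMod q) := by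
  push_cast; ring

lemma ub_EX (hq : 2 < q) (hs : 2 < s) (hs2 : s = 2*M+p) (hp3 : 3 ≤ p) (hpq1 : p ≤ q+1)
    (hMq : M = m*q) :
    hasPath (qskA q s q) ((0:ZMod q),(0:ZMod s)) (((q-2:ℕ):ZMod q), ((M+2:ℕ):ZMod s)) (M+q-1) := by
  have h1 : hasPath (qskA q s q) ((0:ZMod q),(0:ZMod s)) ((0:ZMod q),((s-1:ℕ):ZMod s)) 1 :=
    hasPath_single (step5 hq hs 0)
  have h2 := seg3 hq hs (M+p-3) (s-1) (0:ZMod q) (by omega) (by omega)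
  have h3 := seg1 hq hs (q+1-p) ((0:ZMod q) + ((M+p-3:ℕ):ZMod q)) (((s-1-(M+p-3):ℕ)):ZMod s)
  have h := hasPath_trans (hasPath_trans h1 h2) h3
  rw [show s-1-(M+p-3) = M+2 from by omega] at h
  rw [show 1+(M+p-3)+(q+1-p) = M+q-1 from by omega] at h
  have e1 : (0:ZMod q) + ((M+p-3:ℕ):ZMod q) + ((q+1-p:ℕ):ZMod q) = ((q-2:ℕ):ZMod q) := by
    rw [zero_add, cast_add_nat, show (M+p-3)+(q+1-p) = M+(q-2) from by omega, cast_Mq hq hMq]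
  rwa [e1] at h

lemma ub_EY (hq : 2 < q) (hs : 2 < s) (hs2 : s = 2*M+p) (hp3 : 3 ≤ p) (hMq : M = m*q) :
    hasPath (qskA q s q) ((0:ZMod q),(0:ZMod s)) (((q-2:ℕ):ZMod q), ((M+1:ℕ):ZMod s)) (M+q-1) := by
  have h1 := seg2 hq hs (M+1) 0 (0:ZMod q) (by omega)
  have h2 := seg1 hq hs (q-2) (0:ZMod q) (((0+(M+1):ℕ)):ZMod s)
  have h := hasPath_trans h1 h2
  rw [show 0+(M+1) = M+1 from by omega] at h
  rw [show (M+1)+(q-2) = M+q-1 from by omega] at h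
  rw [show ((0:ℕ) : ZMod s) = (0 : ZMod s) from by simp] at h
  rwa [zero_add] at h

lemma ub_ZX (hq : 2 < q) (hs : 2 < s) (hs2 : s = 2*M+p) (hp3 : 3 ≤ p) (hMq : M = m*q) :
    hasPath (qskA q s q) ((0:ZMod q),(1:ZMod s)) (((q-2:ℕ):ZMod q), ((M+2:ℕ):ZMod s)) (M+q-1) := by
  have h1 := seg2 hq hs (M+1) 1 (0:ZMod q) (by omega)
  have h2 := seg1 hq hs (q-2) (0:ZMod q) (((1+(M+1):ℕ)):ZMod s)
  have h := hasPath_trans h1 h2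
  rw [show 1+(M+1) = M+2 from by omega] at h
  rw [show (M+1)+(q-2) = M+q-1 from by omega] at h
  rw [show ((1:ℕ) : ZMod s) = (1 : ZMod s) from by simp] at h
  rwa [zero_add] at h

lemma ub_ZY (hq : 2 < q) (hs : 2 < s) (hs2 : s = 2*M+p) (hp3 : 3 ≤ p) (hMq : M = m*q) :
    hasPath (qskA q s q) ((0:ZMod q),(1:ZMod s)) (((q-2:ℕ):ZMod q), ((M+1:ℕ):ZMod s)) (M+q-2) := by
  have h1 := seg2 hq hs M 1 (0:ZMod q) (by omega)
  have h2 := seg1 hq hs (q-2) (0:ZMod q) (((1+M:ℕ)):ZMod s)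
  have h := hasPath_trans h1 h2
  rw [show 1+M = M+1 from by omega] at h
  rw [show M+(q-2) = M+q-2 from by omega] at h
  rw [show ((1:ℕ) : ZMod s) = (1 : ZMod s) from by simp] at h
  rwa [zero_add] at h

lemma ub_XE (hq : 2 < q) (hs : 2 < s) (hs2 : s = 2*M+p) (hp3 : 3 ≤ p) (hMq : M = m*q) :
    hasPath (qskA q s q) (((q-2:ℕ):ZMod q), ((M+2:ℕ):ZMod s)) ((0:ZMod q),(0:ZMod s)) (M+2) := by
  have h := seg3 hq hs (M+2) (M+2) (((q-2:ℕ)):ZMod q) (by omega) (by omega)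
  rw [show M+2-(M+2) = 0 from by omega] at h
  rw [show ((0:ℕ) : ZMod s) = (0 : ZMod s) from by simp] at h
  have e1 : ((q-2:ℕ):ZMod q) + ((M+2:ℕ):ZMod q) = 0 := by
    rw [cast_add_nat, show (q-2)+(M+2) = M+q from by omega, cast_Mq0 hq hMq]
  rwa [e1] at h

lemma ub_YE (hq : 2 < q) (hs : 2 < s) (hs2 : s = 2*M+p) (hp3 : 3 ≤ p) (hMq : M = m*q) :
    hasPath (qskA q s q) (((q-2:ℕ):ZMod q), ((M+1:ℕ):ZMod s)) ((0:ZMod q),(0:ZMod s)) (M+2) := by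
  have h1 := seg3 hq hs (M+1) (M+1) (((q-2:ℕ)):ZMod q) (by omega) (by omega)
  rw [show M+1-(M+1) = 0 from by omega] at h1
  have h2 := seg1 hq hs 1 (((q-2:ℕ):ZMod q) + ((M+1:ℕ):ZMod q)) (((0:ℕ)):ZMod s)
  have h := hasPath_trans h1 h2
  rw [show (M+1)+1 = M+2 from by omega] at h
  rw [show ((0:ℕ) : ZMod s) = (0 : ZMod s) from by simp] at h
  have e1 : ((q-2:ℕ):ZMod q) + ((M+1:ℕ):ZMod q) + ((1:ℕ):ZMod q) = 0 := by
    rw [cast_add_nat, cast_add_nat, show (q-2)+(M+1)+1 = M+q from by omega, cast_Mq0 hq hMq]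
  rwa [e1] at h

lemma ub_XZ (hq : 2 < q) (hs : 2 < s) (hs2 : s = 2*M+p) (hp3 : 3 ≤ p) (hMq : M = m*q) :
    hasPath (qskA q s q) (((q-2:ℕ):ZMod q), ((M+2:ℕ):ZMod s)) ((0:ZMod q),(1:ZMod s)) (M+2) := by
  have h1 := seg3 hq hs (M+1) (M+2) (((q-2:ℕ)):ZMod q) (by omega) (by omega)
  rw [show M+2-(M+1) = 1 from by omega] at h1
  have h2 := seg1 hq hs 1 (((q-2:ℕ):ZMod q) + ((M+1:ℕ):ZMod q)) (((1:ℕ)):ZMod s)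
  have h := hasPath_trans h1 h2
  rw [show (M+1)+1 = M+2 from by omega] at h
  rw [show ((1:ℕ) : ZMod s) = (1 : ZMod s) from by simp] at h
  have e1 : ((q-2:ℕ):ZMod q) + ((M+1:ℕ):ZMod q) + ((1:ℕ):ZMod q) = 0 := by
    rw [cast_add_nat, cast_add_nat, show (q-2)+(M+1)+1 = M+q from by omega, cast_Mq0 hq hMq]
  rwa [e1] at h

lemma ub_ZE (hq : 2 < q) (hs : 2 < s) :
    hasPath (qskA q s q) ((0:ZMod q),(1:ZMod s)) ((0:ZMod q),(0:ZMod s)) q := by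
  have h1 := seg3 hq hs 1 1 (0:ZMod q) (by omega) (by omega)
  rw [show (1:ℕ)-(1:ℕ) = 0 from by omega] at h1
  have h2 := seg1 hq hs (q-1) ((0:ZMod q) + ((1:ℕ):ZMod q)) (((0:ℕ)):ZMod s)
  have h := hasPath_trans h1 h2
  rw [show 1+(q-1) = q from by omega] at h
  rw [show ((0:ℕ) : ZMod s) = (0 : ZMod s) from by simp] at h
  rw [show ((1:ℕ) : ZMod s) = (1 : ZMod s) from by simp] at h
  have e1 : (0:ZMod q) + ((1:ℕ):ZMod q) + ((q-1:ℕ):ZMod q) = 0 := by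
    rw [zero_add, cast_add_nat, show 1+(q-1) = q from by omega, ZMod.natCast_self]
  rwa [e1] at h

lemma ub_PE (hq : 2 < q) (hs : 2 < s) :
    hasPath (qskA q s q) ((0:ZMod q) + 1, (0:ZMod s)) ((0:ZMod q),(0:ZMod s)) (q-1) := by
  have h := seg1 hq hs (q-1) ((0:ZMod q)+1) (0:ZMod s)
  have e1 : (0:ZMod q) + 1 + ((q-1:ℕ):ZMod q) = 0 := by
    rw [zero_add, show (1:ZMod q) = ((1:ℕ):ZMod q) from by simp, cast_add_nat,
      show 1+(q-1) = q from by omega, ZMod.natCast_self]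
  rwa [e1] at h

lemma arc_EZ (hq : 2 < q) (hs : 2 < s) :
    qskA q s q ((0:ZMod q),(0:ZMod s)) ((0:ZMod q),(1:ZMod s)) := by
  right; left
  constructor
  · intro hcon
    have h1 : ((0:ℕ):ZMod s) = ((s-1:ℕ):ZMod s) := by
      rw [zmod_neg_one (show 0 < s by omega)]; simpa using hcon
    have := zmod_cast_inj (show 0 < s by omega) (by omega) (by omega) h1
    omega
  · exact Prod.ext rfl (by rw [zero_add])

end UB

/-- if `k = q` and `3 ≤ p ≤ q+1` then `Γ_{q,s,q}` is not weakly
distance-regular, with the explicit witnesses of Case 3. -/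
theorem stmt_18 (q s k m p : ℕ) (hq : 2 < q) (hs : 2 < s)
    (hk1 : max 1 (q + 2 - s) ≤ k) (hk2 : k ≤ q)
    (hsp : s = 2 * m * q + p) (hp2q : p < 2 * q)
    (hkq : k = q) (hp3 : 3 ≤ p) (hpq1 : p ≤ q + 1) :
    ¬ WDR (qskA q s k) ∧
    dtilde (qskA q s k) ((0 : ZMod q), (0 : ZMod s))
        (((q - 2 : ℕ) : ZMod q), ((m * q + 2 : ℕ) : ZMod s)) =
      dtilde (qskA q s k) ((0 : ZMod q), (0 : ZMod s))
        (((q - 2 : ℕ) : ZMod q), ((m * q + 1 : ℕ) : ZMod s)) ∧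
    dtilde (qskA q s k) ((0 : ZMod q), (0 : ZMod s)) ((0 : ZMod q), (1 : ZMod s)) = (1, q) ∧
    {w : ZMod q × ZMod s |
        dtilde (qskA q s k) ((0 : ZMod q), (0 : ZMod s)) w = (1, q) ∧
        dtilde (qskA q s k) w (((q - 2 : ℕ) : ZMod q), ((m * q + 1 : ℕ) : ZMod s)) =
          dtilde (qskA q s k) ((0 : ZMod q), (1 : ZMod s))
            (((q - 2 : ℕ) : ZMod q), ((m * q + 2 : ℕ) : ZMod s))} = ∅ := by
  rw [hkq]
  clear hk1 hk2
  obtain ⟨M, hM⟩ : ∃ M, M = m * q := ⟨_, rfl⟩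
  have hs2 : s = 2*M + p := by rw [hM, hsp]; ring
  rw [← hM]
  haveI : NeZero q := ⟨by omega⟩
  haveI : NeZero s := ⟨by omega⟩
  set A := qskA q s q with hA
  set E : ZMod q × ZMod s := ((0 : ZMod q), (0 : ZMod s)) with hE
  set Z : ZMod q × ZMod s := ((0 : ZMod q), (1 : ZMod s)) with hZ
  set X : ZMod q × ZMod s := (((q - 2 : ℕ) : ZMod q), ((M + 2 : ℕ) : ZMod s)) with hX
  set Y : ZMod q × ZMod s := (((q - 2 : ℕ) : ZMod q), ((M + 1 : ℕ) : ZMod s)) with hY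
  set W : ZMod q × ZMod s := ((0 : ZMod q), ((s - 1 : ℕ) : ZMod s)) with hW
  have dEX : ddist A E X = M+q-1 :=
    ddist_eq (ub_EX hq hs hs2 hp3 hpq1 hM) (fun m' h => lb_EX hq hs hs2 hp3 hM h)
  have dEY : ddist A E Y = M+q-1 :=
    ddist_eq (ub_EY hq hs hs2 hp3 hM) (fun m' h => lb_EY hq hs hs2 hp3 hM h)
  have dXE : ddist A X E = M+2 :=
    ddist_eq (ub_XE hq hs hs2 hp3 hM) (fun m' h => lb_XE hq hs hs2 hp3 hM h)
  have dYE : ddist A Y E = M+2 :=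
    ddist_eq (ub_YE hq hs hs2 hp3 hM) (fun m' h => lb_YE hq hs hs2 hp3 hM h)
  have dZX : ddist A Z X = M+q-1 :=
    ddist_eq (ub_ZX hq hs hs2 hp3 hM) (fun m' h => lb_ZX hq hs hs2 hp3 hM h)
  have dXZ : ddist A X Z = M+2 :=
    ddist_eq (ub_XZ hq hs hs2 hp3 hM) (fun m' h => lb_XZ hq hs hs2 hp3 hM h)
  have dZE : ddist A Z E = q :=
    ddist_eq (ub_ZE hq hs) (fun m' h => lb_ZE hq hs h)
  have hzero_ne_one : (0 : ZMod s) ≠ (1 : ZMod s) := by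
    intro hcon
    have h1 : ((0:ℕ):ZMod s) = ((1:ℕ):ZMod s) := by simpa using hcon
    have := zmod_cast_inj (show 0 < s by omega) (by omega) (by omega) h1
    omega
  have dEZ : ddist A E Z = 1 := by
    refine ddist_eq (hasPath_single (arc_EZ hq hs)) (fun m' h => ?_)
    rcases Nat.eq_zero_or_pos m' with h0 | h0
    · subst h0
      obtain ⟨f, hf0, hfm, _⟩ := h
      have h1 : E = Z := by rw [← hf0, hfm]
      have h2 := congrArg Prod.snd h1
      exact absurd h2 hzero_ne_one
    · omega
  have hconj3 : dtilde A E Z = (1, q) := by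
    unfold dtilde
    rw [dEZ, dZE]
  have hconj2 : dtilde A E X = dtilde A E Y := by
    unfold dtilde
    rw [dEX, dXE, dEY, dYE]
  have hYW_ne : ddist A Y W ≠ M+2 := by
    intro hcon
    have hp := hasPath_of_ddist_eq hcon (by omega)
    have := lb_YW hq hs hs2 hp3 hpq1 hM hp
    omega
  have hzero_ne_neg_one : (0 : ZMod s) ≠ -1 := by
    intro hcon
    have h1 : ((0:ℕ):ZMod s) = ((s-1:ℕ):ZMod s) := by
      rw [zmod_neg_one (show 0 < s by omega)]; simpa using hcon
    have := zmod_cast_inj (show 0 < s by omega) (by omega) (by omega) h1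
    omega
  have hconj4 : {w : ZMod q × ZMod s |
      dtilde A E w = (1, q) ∧ dtilde A w Y = dtilde A Z X} = ∅ := by
    rw [Set.eq_empty_iff_forall_notMem]
    intro w hw
    obtain ⟨hw1, hw2⟩ := hw
    have h1 : ddist A E w = 1 := by
      have := congrArg Prod.fst hw1; simpa [dtilde] using this
    have h2 : ddist A w E = q := by
      have := congrArg Prod.snd hw1; simpa [dtilde] using this
    obtain ⟨f, hf0, hf1, hstep⟩ := hasPath_of_ddist_eq h1 one_ne_zero
    have harc : qskA q s q E w := by
      have := hstep 0 (by omega); rwa [hf0, hf1] at this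
    rcases harc with hA1 | ⟨hB0, hB⟩ | ⟨hC0, hC⟩ | ⟨hD0, hD⟩ | ⟨hE0, hE1⟩
    · rw [hA1] at h2
      have hle : ddist A (E.1 + 1, E.2) E ≤ q - 1 := ddist_le (ub_PE hq hs)
      omega
    · have hwZ : w = Z := by rw [hB]; exact Prod.ext rfl (zero_add 1)
      rw [hwZ] at hw2
      have hfst : ddist A Z Y = ddist A Z X := by
        have := congrArg Prod.fst hw2; simpa [dtilde] using this
      rw [dZX] at hfst
      have hle : ddist A Z Y ≤ M + q - 2 := ddist_le (ub_ZY hq hs hs2 hp3 hM)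
      omega
    · exact hC0 rfl
    · exact hzero_ne_neg_one hD0
    · have hwW : w = W := by
        rw [hE1]
        exact Prod.ext (by rw [ZMod.natCast_self, add_zero])
          (zmod_neg_one (show 0 < s by omega)).symm
      rw [hwW] at hw2
      have hsnd : ddist A Y W = ddist A X Z := by
        have := congrArg Prod.snd hw2; simpa [dtilde] using this
      rw [dXZ] at hsnd
      exact hYW_ne hsnd
  refine ⟨?_, hconj2, hconj3, hconj4⟩
  intro hw
  have hcard := hw E X E Y hconj2 (1,q) (dtilde A Z X)
  have hmem : Z ∈ {z_ : ZMod q × ZMod s | dtilde A E z_ = (1,q) ∧ dtilde A z_ X = dtilde A Z X} :=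
    ⟨hconj3, rfl⟩
  have hpos : 0 < Nat.card {z_ : ZMod q × ZMod s |
      dtilde A E z_ = (1,q) ∧ dtilde A z_ X = dtilde A Z X} := by
    haveI : Nonempty ↥{z_ : ZMod q × ZMod s |
        dtilde A E z_ = (1,q) ∧ dtilde A z_ X = dtilde A Z X} := ⟨⟨Z, hmem⟩⟩
    exact Nat.card_pos
  rw [hconj4] at hcard
  have hz : Nat.card (∅ : Set (ZMod q × ZMod s)) = 0 := by simp
  rw [hz] at hcard
  omega
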